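/- Let k ≥ 2 and 1 ≤ j ≤ k−1. In the genus-k surface group Σ_k, the intersection P_j ∩ Q_j equals the cyclic subgroup generated by the image of the element [a_1,b_1][a_2,b_2]⋯[a_j,b_j] (equivalently, Σ_k splits as the amalgamated free product P_j ∗_{⟨c⟩} Q_j over this cyclic subgroup, and P_j ∩ Q_j = ⟨c⟩ where c is the image of [a_1,b_1]⋯[a_j,b_j]). -/

import Mathlib

open scoped commutatorElement

/-- The surface relator `[a_1,b_1][a_2,b_2]⋯[a_k,b_k]` in the free group on
`Fin k × Bool`, where `(i, false)` represents `a_{i+1}` and `(i, true)` represents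
`b_{i+1}`. -/
def surfRel (k : ℕ) : FreeGroup (Fin k × Bool) :=
  (List.ofFn (fun i : Fin k => ⁅FreeGroup.of (i, false), FreeGroup.of (i, true)⁆)).prod

/-- The genus-`k` surface group `Σ_k`. -/
abbrev SurfaceGroup (k : ℕ) : Type :=
  FreeGroup (Fin k × Bool) ⧸ Subgroup.normalClosure {surfRel k}

/-- The image in `Σ_k` of the free generator indexed by `p`. -/
def sgen (k : ℕ) (p : Fin k × Bool) : SurfaceGroup k :=
  QuotientGroup.mk' (Subgroup.normalClosure {surfRel k}) (FreeGroup.of p)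

/-- `P_j`: the subgroup of `Σ_k` generated by the images of `a_1, b_1, …, a_j, b_j`. -/
def P (k j : ℕ) : Subgroup (SurfaceGroup k) :=
  Subgroup.closure (sgen k '' {p : Fin k × Bool | (p.1 : ℕ) < j})

/-- `Q_j`: the subgroup of `Σ_k` generated by the images of `a_{j+1}, b_{j+1}, …, a_k, b_k`. -/
def Q (k j : ℕ) : Subgroup (SurfaceGroup k) :=
  Subgroup.closure (sgen k '' {p : Fin k × Bool | j ≤ (p.1 : ℕ)})

/-!
Cut the surface along the separating curve `c = [a_1,b_1]⋯[a_j,b_j]`. Writing `k = j + m`,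
the relator reads `c_j · c_m = 1` with `c_j` a word in the first `2j` generators and `c_m` a
word in the last `2m`, so `Σ_k` is the amalgamated product `F_{2j} *_ℤ F_{2m}` in which
`1 ∈ ℤ` goes to `c_j` and to `c_m⁻¹`; in `Σ_k` these become `P_j`, `Q_j` and `⟨c⟩`. Both edge
maps `ℤ → F` are injective, because `c_j` and `c_m` are nontrivial elements of torsion-free
groups, and in an amalgamated product with injective edge maps two distinct factors meet
exactly in the edge group.
-/

namespace SurfaceGroup

open Monoid

theorem zpowersHom_injective {G : Type*} [Group G] [IsMulTorsionFree G] {a : G} (ha : a ≠ 1) :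
    Function.Injective (zpowersHom G a) := by
  refine (injective_iff_map_eq_one _).2 fun n hn => ?_
  rw [zpowersHom_apply, IsMulTorsionFree.zpow_eq_one_iff_right ha] at hn
  simpa using congrArg Multiplicative.ofAdd hn

theorem map_surfRel {n : ℕ} {α : Type*} (e : Fin n → α) :
    FreeGroup.map (Prod.map e id) (surfRel n) =
      (List.ofFn fun i => ⁅FreeGroup.of (e i, false), FreeGroup.of (e i, true)⁆).prod := by
  simp [surfRel, map_list_prod, List.map_ofFn, Function.comp_def, map_commutatorElement]

theorem surfRel_add (j m : ℕ) :
    surfRel (j + m) = FreeGroup.map (Prod.map (Fin.castAdd m) id) (surfRel j) *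
      FreeGroup.map (Prod.map (Fin.natAdd j) id) (surfRel m) := by
  rw [map_surfRel, map_surfRel, surfRel, List.ofFn_add, List.prod_append]
  rfl

theorem surfRel_ne_one {n : ℕ} (hn : n ≠ 0) : surfRel n ≠ 1 := by
  obtain ⟨n, rfl⟩ := Nat.exists_eq_add_one_of_ne_zero hn
  let f : FreeGroup (Fin (n + 1) × Bool) →* Equiv.Perm (Fin 3) := FreeGroup.lift fun p =>
    if p.1 = 0 then cond p.2 (Equiv.swap 1 2) (Equiv.swap 0 1) else 1
  have hf : f (surfRel (n + 1)) = ⁅(Equiv.swap 0 1 : Equiv.Perm (Fin 3)), Equiv.swap 1 2⁆ := by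
    simp [f, surfRel, map_list_prod, List.map_ofFn, List.ofFn_succ, Function.comp_def,
      map_commutatorElement, Fin.succ_ne_zero]
  intro h
  rw [h, _root_.map_one] at hf
  exact absurd hf (by decide)

variable (j m : ℕ)

/-- `Factor j m false` is free on `a_1, …, b_j` and `Factor j m true` on `a_{j+1}, …, b_{j+m}`,
the latter reindexed from `0`. -/
abbrev Factor (b : Bool) : Type := FreeGroup (Fin (cond b m j) × Bool)

def factorIndex : (b : Bool) → Fin (cond b m j) → Fin (j + m)
  | false => Fin.castAdd m
  | true => Fin.natAdd j

def factorRel : (b : Bool) → Factor j m b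
  | false => surfRel j
  | true => (surfRel m)⁻¹

def edge (b : Bool) : Multiplicative ℤ →* Factor j m b := zpowersHom _ (factorRel j m b)

theorem edge_ofAdd_one (b : Bool) : edge j m b (Multiplicative.ofAdd 1) = factorRel j m b := by
  simp [edge]

abbrev Amalgam : Type := PushoutI (edge j m)

def factorHom (b : Bool) : Factor j m b →* SurfaceGroup (j + m) :=
  (QuotientGroup.mk' _).comp (FreeGroup.map (Prod.map (factorIndex j m b) id))

theorem factorHom_surfRel_mul_factorHom_surfRel :
    factorHom j m false (surfRel j) * factorHom j m true (surfRel m) = 1 := by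
  rw [factorHom, factorHom, MonoidHom.comp_apply, MonoidHom.comp_apply, ← _root_.map_mul]
  exact (QuotientGroup.eq_one_iff _).2 (Subgroup.subset_normalClosure (surfRel_add j m).symm)

def ofAmalgam : Amalgam j m →* SurfaceGroup (j + m) :=
  PushoutI.lift (factorHom j m) (zpowersHom _ (factorHom j m false (surfRel j))) fun b => by
    refine MonoidHom.ext_mint ?_
    rw [MonoidHom.comp_apply, edge_ofAdd_one, zpowersHom_apply, toAdd_ofAdd, zpow_one]
    cases b
    · rfl
    · exact (_root_.map_inv _ _).trans
        (inv_eq_of_mul_eq_one_left (factorHom_surfRel_mul_factorHom_surfRel j m))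

def amalgamGen (p : Fin (j + m) × Bool) : Amalgam j m :=
  Fin.addCases (motive := fun _ => Amalgam j m)
    (fun i => PushoutI.of false (FreeGroup.of (i, p.2)))
    (fun i => PushoutI.of true (FreeGroup.of (i, p.2))) p.1

theorem lift_amalgamGen_comp_map (b : Bool) :
    (FreeGroup.lift (amalgamGen j m)).comp (FreeGroup.map (Prod.map (factorIndex j m b) id)) =
      PushoutI.of (φ := edge j m) b := by
  ext p
  cases b <;> simp [amalgamGen, factorIndex]

theorem lift_amalgamGen_surfRel : FreeGroup.lift (amalgamGen j m) (surfRel (j + m)) = 1 :=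
  calc FreeGroup.lift (amalgamGen j m) (surfRel (j + m))
      = PushoutI.of false (factorRel j m false) * (PushoutI.of true (factorRel j m true))⁻¹ := by
        rw [surfRel_add, _root_.map_mul, ← _root_.map_inv, factorRel, factorRel, inv_inv,
          ← lift_amalgamGen_comp_map j m false, ← lift_amalgamGen_comp_map j m true]
        rfl
    _ = PushoutI.base (edge j m) (.ofAdd 1) * (PushoutI.base (edge j m) (.ofAdd 1))⁻¹ := by
        simp only [← edge_ofAdd_one, PushoutI.of_apply_eq_base]
    _ = 1 := mul_inv_cancel _

def toAmalgam : SurfaceGroup (j + m) →* Amalgam j m :=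
  QuotientGroup.lift _ (FreeGroup.lift (amalgamGen j m))
    (Subgroup.normalClosure_le_normal (Set.singleton_subset_iff.2 (lift_amalgamGen_surfRel j m)))

theorem toAmalgam_comp_factorHom (b : Bool) :
    (toAmalgam j m).comp (factorHom j m b) = PushoutI.of (φ := edge j m) b := by
  rw [factorHom, ← MonoidHom.comp_assoc, toAmalgam, QuotientGroup.lift_comp_mk',
    lift_amalgamGen_comp_map]

theorem ofAmalgam_comp_toAmalgam : (ofAmalgam j m).comp (toAmalgam j m) = MonoidHom.id _ := by
  have key (b : Bool) (x : Factor j m b) :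
      ofAmalgam j m (toAmalgam j m (factorHom j m b x)) = factorHom j m b x := by
    rw [← MonoidHom.comp_apply (toAmalgam j m), toAmalgam_comp_factorHom, ofAmalgam,
      PushoutI.lift_of]
  refine QuotientGroup.monoidHom_ext _ (FreeGroup.ext_hom _ _ fun ⟨i, s⟩ => ?_)
  induction i using Fin.addCases with
  | left i => exact key false (.of (i, s))
  | right i => exact key true (.of (i, s))

theorem toAmalgam_injective : Function.Injective (toAmalgam j m) :=
  Function.LeftInverse.injective (g := ofAmalgam j m)
    (DFunLike.congr_fun (ofAmalgam_comp_toAmalgam j m))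

theorem range_factorHom (b : Bool) :
    (factorHom j m b).range =
      Subgroup.closure (sgen (j + m) '' Set.range (Prod.map (factorIndex j m b) id)) := by
  rw [factorHom, MonoidHom.range_comp, FreeGroup.range_map, MonoidHom.map_closure,
    Set.image_image]
  rfl

theorem P_eq_range_factorHom : P (j + m) j = (factorHom j m false).range := by
  rw [range_factorHom, P, Set.range_prodMap, Set.range_id, factorIndex, Fin.castAdd,
    Fin.range_castLE]
  congr 2
  ext
  simp

theorem Q_eq_range_factorHom : Q (j + m) j = (factorHom j m true).range := by
  rw [range_factorHom, Q, Set.range_prodMap, Set.range_id, factorIndex, Fin.range_natAdd]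
  congr 2
  ext
  simp

variable {j m}

theorem edge_injective (hj : j ≠ 0) (hm : m ≠ 0) (b : Bool) : Function.Injective (edge j m b) := by
  refine zpowersHom_injective ?_
  cases b
  · exact surfRel_ne_one hj
  · exact inv_ne_one.2 (surfRel_ne_one hm)

theorem P_inf_Q_eq_zpowers (hj : j ≠ 0) (hm : m ≠ 0) :
    P (j + m) j ⊓ Q (j + m) j = Subgroup.zpowers (factorHom j m false (surfRel j)) := by
  have hinj := toAmalgam_injective j m
  have hc : toAmalgam j m (factorHom j m false (surfRel j)) =
      PushoutI.base (edge j m) (.ofAdd 1) := by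
    rw [← MonoidHom.comp_apply, toAmalgam_comp_factorHom, ← PushoutI.of_apply_eq_base,
      edge_ofAdd_one]
    rfl
  apply Subgroup.map_injective hinj
  rw [Subgroup.map_inf _ _ _ hinj, P_eq_range_factorHom, Q_eq_range_factorHom,
    MonoidHom.map_range, MonoidHom.map_range, toAmalgam_comp_factorHom, toAmalgam_comp_factorHom,
    PushoutI.inf_of_range_eq_base_range (edge_injective hj hm) Bool.false_ne_true,
    MonoidHom.map_zpowers, hc, ← Subgroup.range_zpowersHom]
  congr 1
  exact MonoidHom.ext_mint (by simp)

theorem factorHom_false_surfRel :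
    factorHom j m false (surfRel j) = QuotientGroup.mk' _ (List.ofFn fun i : Fin j =>
      ⁅FreeGroup.of (Fin.castAdd m i, false), FreeGroup.of (Fin.castAdd m i, true)⁆).prod :=
  congrArg _ (map_surfRel _)

end SurfaceGroup

/-- In the genus-`k` surface group `Σ_k` (`k ≥ 2`, `1 ≤ j ≤ k-1`), the intersection
`P_j ∩ Q_j` is the cyclic subgroup generated by the image `c` of the element
`[a_1,b_1][a_2,b_2]⋯[a_j,b_j]`. -/
theorem surface_intersection_eq_zpowers (k j : ℕ) (hj : 1 ≤ j)
    (hjk : j ≤ k - 1) :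
    P k j ⊓ Q k j =
      Subgroup.zpowers
        (QuotientGroup.mk' (Subgroup.normalClosure {surfRel k})
          ((List.ofFn (fun i : Fin j =>
            ⁅FreeGroup.of ((Fin.castLE (by omega) i : Fin k), false),
              FreeGroup.of ((Fin.castLE (by omega) i : Fin k), true)⁆)).prod)) := by
  obtain ⟨m, rfl⟩ : ∃ m, k = j + m := ⟨k - j, by omega⟩
  rw [SurfaceGroup.P_inf_Q_eq_zpowers (by omega) (by omega),
    SurfaceGroup.factorHom_false_surfRel]
  rfl
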